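/- Let Θ and X be finite nonempty sets, u : X × Θ → ℝ, and let x : Θ → X be a DETERMINISTIC cyclically monotone social choice function (identified with the map θ ↦ δ_{x(θ)} into Δ(X)). Fix a quota q ∈ Δ(Θ), an integer K ≥ 1, and a type vector θ = (θ^1,…,θ^K) ∈ Θ^K. Then there exists a feasible report vector r = (r^1,…,r^K) at quota q that maximizes the payoff (1/K)·Σ_k ū(x(r^k),θ^k) among all feasible report vectors at quota q and that satisfies (1/K)·Σ_{k=1}^K ‖x(r^k) − δ_{x(θ^k)}‖ ≤ (|x(Θ)| − 1)·‖x_*(q) − x_*(marg θ)‖, where x_*(p) ∈ Δ(X) denotes the pushforward x_*(p)(a) = Σ_{θ' : x(θ') = a} p(θ'), and x(r^k) = x_*(r^k). -/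

import Mathlib

open Finset

/-- `p` is a probability vector on the finite set `Z`. -/
def IsProbVec {Z : Type*} [Fintype Z] (p : Z → ℝ) : Prop :=
  (∀ z, 0 ≤ p z) ∧ ∑ z, p z = 1

/-- Total variation distance `‖p − q‖ = (1/2)·Σ_z |p z − q z|`. -/
noncomputable def tv {Z : Type*} [Fintype Z] (p q : Z → ℝ) : ℝ :=
  (∑ z, |p z - q z|) / 2

/-- Lifted utility: `ū(μ,θ) = Σ_a μ(a)·u(a,θ)` for a lottery `μ ∈ Δ(X)`. -/
noncomputable def ubar {Θ X : Type*} [Fintype X]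
    (u : X × Θ → ℝ) (μ : X → ℝ) (θ : Θ) : ℝ :=
  ∑ a, μ a * u (a, θ)

/-- Pushforward of `p ∈ Δ(Θ)` under the deterministic map `x : Θ → X`:
`x_*(p)(a) = Σ_{θ' : x θ' = a} p θ'`. -/
noncomputable def push {Θ X : Type*} [Fintype Θ] [DecidableEq X]
    (x : Θ → X) (p : Θ → ℝ) : X → ℝ :=
  fun a => ∑ θ' ∈ Finset.univ.filter (fun θ' => x θ' = a), p θ'

/-- Point mass at `a`. -/
noncomputable def delta {X : Type*} [DecidableEq X] (a : X) : X → ℝ :=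
  fun a' => if a' = a then 1 else 0

/-- A deterministic map `x : Θ → X` is cyclically monotone for the utility `u`. -/
def CyclMonoDet {Θ X : Type*} (u : X × Θ → ℝ) (x : Θ → X) : Prop :=
  ∀ J : ℕ, ∀ θs : Fin (J + 2) → Θ, Function.Injective θs →
    ∑ j, u (x (θs (j + 1)), θs j) ≤ ∑ j, u (x (θs j), θs j)

/-- `r = (r^1,…,r^K)` is a feasible report vector at quota `q`. -/
def Feasible {Θ : Type*} [Fintype Θ] (K : ℕ) (q : Θ → ℝ)
    (r : Fin K → Θ → ℝ) : Prop :=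
  (∀ k, IsProbVec (r k)) ∧ ∀ θ', (∑ k, r k θ') / K = q θ'

/-- Payoff of the report vector `r` at the type vector `θv` under the
deterministic social choice function `x`: `(1/K)·Σ_k ū(x_*(r^k),θ^k)`. -/
noncomputable def payoffDet {Θ X : Type*} [Fintype Θ] [Fintype X] [DecidableEq X]
    (u : X × Θ → ℝ) (x : Θ → X) (K : ℕ)
    (θv : Fin K → Θ) (r : Fin K → Θ → ℝ) : ℝ :=
  (∑ k, ubar u (push x (r k)) (θv k)) / K

/-- Empirical distribution of a type vector: `(marg θ)(θ') = |{k : θ^k = θ'}|/K`. -/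
noncomputable def marg {Θ : Type*} [Fintype Θ] [DecidableEq Θ] (K : ℕ)
    (θv : Fin K → Θ) : Θ → ℝ :=
  fun θ' => ((Finset.univ.filter (fun k => θv k = θ')).card : ℝ) / K

/-!
Take a payoff-maximising feasible report vector that, among all maximisers, puts the most weight
on the agents' own outcomes; both maxima exist by compactness. For such a vector the relation on
`X` with an edge `b → c` whenever an agent with outcome `b` is assigned mass at some `c ≠ b` is
acyclic: shifting mass around a simple cycle keeps the quota, does not lower the payoff by cyclic
monotonicity, and raises the own-outcome weight. Rank the at most `|x(Θ)|` outcomes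
topologically. Every unit of displaced mass crosses one of the `|x(Θ)| - 1` cuts between
consecutive ranks, and since no mass crosses a cut downwards, the mass crossing a cut is at most
`K · ‖x_*(q) − x_*(marg θ)‖`.
-/

open Function Relation

section Push

variable {Θ X : Type*} [Fintype Θ] [DecidableEq X]

lemma sum_push [Fintype X] (x : Θ → X) (p : Θ → ℝ) : ∑ a, push x p a = ∑ θ, p θ := by
  simpa [push] using sum_fiberwise univ x p

lemma IsProbVec.push [Fintype X] {p : Θ → ℝ} (hp : IsProbVec p) (x : Θ → X) :
    IsProbVec (push x p) :=
  ⟨fun _ => sum_nonneg fun θ _ => hp.1 θ, (sum_push x p).trans hp.2⟩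

lemma exists_pos_of_push_pos {x : Θ → X} {p : Θ → ℝ} {a : X} (h : 0 < push x p a) :
    ∃ θ, x θ = a ∧ 0 < p θ := by
  obtain ⟨θ, hθ, hpos⟩ := exists_lt_of_sum_lt (f := fun _ => (0 : ℝ))
    (g := p) (s := univ.filter (x · = a)) (by rw [sum_const_zero]; exact h)
  exact ⟨θ, (mem_filter.1 hθ).2, hpos⟩

lemma push_sum {ι : Type*} (x : Θ → X) (s : Finset ι) (r : ι → Θ → ℝ) :
    push x (∑ k ∈ s, r k) = ∑ k ∈ s, push x (r k) := by
  ext a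
  simp only [push, Finset.sum_apply]
  exact sum_comm

lemma push_smul (x : Θ → X) (c : ℝ) (p : Θ → ℝ) : push x (c • p) = c • push x p := by
  ext a
  simp [push, mul_sum]

lemma push_delta [DecidableEq Θ] (x : Θ → X) (θ : Θ) : push x (delta θ) = delta (x θ) := by
  ext a
  by_cases h : x θ = a <;> simp [push, delta, h, eq_comm]

lemma ubar_push [Fintype X] (u : X × Θ → ℝ) (x : Θ → X) (p : Θ → ℝ) (θ : Θ) :
    ubar u (push x p) θ = ∑ θ', p θ' * u (x θ', θ) := by
  rw [ubar, ← sum_fiberwise univ x]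
  refine sum_congr rfl fun a _ => ?_
  rw [push, sum_mul]
  exact sum_congr rfl fun θ' h => by rw [(mem_filter.1 h).2]

end Push

section TotalVariation

variable {X : Type*} [Fintype X]

lemma tv_smul {c : ℝ} (hc : 0 ≤ c) (p q : X → ℝ) : tv (c • p) (c • q) = c * tv p q := by
  simp only [tv, Pi.smul_apply, smul_eq_mul, ← mul_sub, abs_mul, abs_of_nonneg hc, ← mul_sum]
  ring

lemma tv_delta [DecidableEq X] {μ : X → ℝ} (hμ : IsProbVec μ) (a : X) :
    tv μ (delta a) = 1 - μ a := by
  have hle : μ a ≤ 1 := hμ.2 ▸ single_le_sum (fun b _ => hμ.1 b) (mem_univ a)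
  have hrest : ∑ b ∈ univ.erase a, |μ b - delta a b| = 1 - μ a := by
    rw [sum_congr rfl fun b hb => by rw [delta, if_neg (ne_of_mem_erase hb), sub_zero,
      abs_of_nonneg (hμ.1 b)], sum_erase_eq_sub (mem_univ a), hμ.2]
  rw [tv, ← add_sum_erase _ _ (mem_univ a), hrest, delta, if_pos rfl,
    abs_of_nonpos (by linarith)]
  ring

lemma sum_sub_le_tv {p m : X → ℝ} (hpm : ∑ a, p a = ∑ a, m a) (s : Finset X) :
    ∑ a ∈ s, (p a - m a) ≤ tv p m := by
  have hpos : ∑ a, max (p a - m a) 0 = tv p m := by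
    have h0 : ∑ a, (p a - m a) = 0 := by rw [sum_sub_distrib, hpm, sub_self]
    have hmax : ∀ a, max (p a - m a) 0 = (|p a - m a| + (p a - m a)) / 2 := fun a => by
      rcases le_total (p a - m a) 0 with h | h
      · rw [max_eq_right h, abs_of_nonpos h]; ring
      · rw [max_eq_left h, abs_of_nonneg h]; ring
    rw [sum_congr rfl fun a _ => hmax a, ← sum_div, sum_add_distrib, h0, add_zero, tv]
  calc ∑ a ∈ s, (p a - m a) ≤ ∑ a ∈ s, max (p a - m a) 0 :=
        sum_le_sum fun a _ => le_max_left _ _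
    _ ≤ ∑ a, max (p a - m a) 0 :=
        sum_le_sum_of_subset_of_nonneg (subset_univ s) fun a _ _ => le_max_right _ _
    _ = tv p m := hpos

end TotalVariation

section Transport

variable {ι α : Type*} [Fintype ι] [Fintype α] [DecidableEq α]

lemma tv_delta_eq_sum_rank_gt {μ : α → ℝ} (hμ : IsProbVec μ) {a : α} (f : α → ℕ)
    (hf : ∀ b, 0 < μ b → b ≠ a → f a < f b) :
    tv μ (delta a) = ∑ b with f a < f b, μ b := by
  have hbelow : ∑ b with ¬ f a < f b, μ b = μ a := by
    refine sum_eq_single_of_mem a (by simp) fun b hb hba => ?_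
    exact le_antisymm (not_lt.1 fun hpos => (mem_filter.1 hb).2 (hf b hpos hba)) (hμ.1 b)
  rw [tv_delta hμ, ← hμ.2, ← sum_filter_add_sum_filter_not univ (f a < f ·), hbelow]
  ring

variable {γ : ι → α → ℝ} {a : ι → α}

/-- Agents whose own outcome lies in `A` keep all their mass in `A`, so the mass entering `A`
from outside is the net surplus of `∑ γ` over `∑ δ_a` on `A`. -/
lemma sum_mass_into_le_tv (hγ : ∀ k, IsProbVec (γ k)) (A : Finset α)
    (hA : ∀ k, a k ∈ A → ∀ b, 0 < γ k b → b ∈ A) :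
    ∑ k with a k ∉ A, ∑ b ∈ A, γ k b ≤ tv (∑ k, γ k) (∑ k, delta (a k)) := by
  have hagent : ∀ k, ∑ b ∈ A, (γ k b - delta (a k) b) =
      if a k ∈ A then 0 else ∑ b ∈ A, γ k b := by
    intro k
    simp only [sum_sub_distrib, delta, sum_ite_eq']
    split_ifs with hk
    · rw [sum_subset (subset_univ A) fun b _ hb =>
        le_antisymm (not_lt.1 (hb ∘ hA k hk b)) ((hγ k).1 b), (hγ k).2, sub_self]
    · rw [sub_zero]
  have htotal : ∑ b, (∑ k, γ k) b = ∑ b, (∑ k, delta (a k)) b := by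
    simp only [Finset.sum_apply]
    rw [sum_comm, sum_comm (f := fun b k => delta (a k) b)]
    simp [(hγ _).2, delta]
  calc ∑ k with a k ∉ A, ∑ b ∈ A, γ k b
      = ∑ k, ∑ b ∈ A, (γ k b - delta (a k) b) := by
        rw [sum_filter]
        exact sum_congr rfl fun k _ => by rw [hagent, ite_not]
    _ = ∑ b ∈ A, ((∑ k, γ k) b - (∑ k, delta (a k)) b) := by
        simp only [Finset.sum_apply, ← sum_sub_distrib]
        exact sum_comm
    _ ≤ _ := sum_sub_le_tv htotal A

lemma tv_delta_le_sum_cuts {μ : α → ℝ} (hμ : IsProbVec μ) {a : α} (f : α → ℕ) (m : ℕ)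
    (hrank : ∀ b, 0 < μ b → b ≠ a → f a < f b) (hbound : ∀ b, 0 < μ b → f b ≤ m) :
    tv μ (delta a) ≤ ∑ t ∈ range m, if f a ≤ t then ∑ b with t < f b, μ b else 0 := by
  have hnonneg : ∀ t ∈ range m, 0 ≤ if f a ≤ t then ∑ b with t < f b, μ b else 0 :=
    fun t _ => by split_ifs <;> simp [sum_nonneg, hμ.1]
  rw [tv_delta_eq_sum_rank_gt hμ f hrank]
  by_cases hm : f a < m
  · simpa using single_le_sum hnonneg (mem_range.2 hm)
  · refine (sum_eq_zero fun b hb => ?_).trans_le (sum_nonneg hnonneg)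
    refine le_antisymm (not_lt.1 fun hpos => ?_) (hμ.1 b)
    have := hbound b hpos
    simp only [mem_filter] at hb
    omega

theorem sum_tv_delta_le_mul_tv (hγ : ∀ k, IsProbVec (γ k)) (f : α → ℕ) (m : ℕ)
    (hrank : ∀ k b, 0 < γ k b → b ≠ a k → f (a k) < f b)
    (hbound : ∀ k b, 0 < γ k b → f b ≤ m) :
    ∑ k, tv (γ k) (delta (a k)) ≤ m * tv (∑ k, γ k) (∑ k, delta (a k)) := by
  have hcut : ∀ t, ∑ k with f (a k) ≤ t, ∑ b with t < f b, γ k b ≤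
      tv (∑ k, γ k) (∑ k, delta (a k)) := fun t => by
    refine le_of_eq_of_le ?_ (sum_mass_into_le_tv hγ (univ.filter (t < f ·)) fun k hk b hb => ?_)
    · simp
    · rw [mem_filter] at hk ⊢
      rcases eq_or_ne b (a k) with rfl | hba
      · exact hk
      · exact ⟨mem_univ b, hk.2.trans (hrank k b hb hba)⟩
  calc ∑ k, tv (γ k) (delta (a k))
      ≤ ∑ k, ∑ t ∈ range m, if f (a k) ≤ t then ∑ b with t < f b, γ k b else 0 :=
        sum_le_sum fun k _ => tv_delta_le_sum_cuts (hγ k) f m (hrank k) (hbound k)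
    _ = ∑ t ∈ range m, ∑ k with f (a k) ≤ t, ∑ b with t < f b, γ k b := by
        rw [sum_comm]
        simp only [sum_filter]
    _ ≤ ∑ _t ∈ range m, tv (∑ k, γ k) (∑ k, delta (a k)) := sum_le_sum fun t _ => hcut t
    _ = m * tv (∑ k, γ k) (∑ k, delta (a k)) := by simp

end Transport

section Cycles

variable {α : Type*} {E : α → α → Prop}

lemma exists_walk_of_transGen_self {a : α} (h : TransGen E a a) :
    ∃ g : ℕ → α, ∀ n, E (g n) (g (n + 1)) := by
  have hnext : ∀ b : {b // TransGen E b b}, ∃ c : {c // TransGen E c c}, E b c := by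
    rintro ⟨b, hb⟩
    obtain ⟨c, hbc, hcb⟩ := TransGen.head'_iff.1 hb
    exact ⟨⟨c, TransGen.tail' hcb hbc⟩, hbc⟩
  choose next hnext using hnext
  refine ⟨fun n => (next^[n] ⟨a, h⟩).1, fun n => ?_⟩
  simp only [iterate_succ_apply']
  exact hnext _

/-- A shortest closed stretch `g i, …, g (i + d) = g i` of an infinite walk in a finite type
is a simple cycle. -/
lemma exists_injective_cycle_of_walk [Finite α] (hirr : ∀ a, ¬ E a a) {g : ℕ → α}
    (hg : ∀ n, E (g n) (g (n + 1))) :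
    ∃ (J : ℕ) (c : Fin (J + 2) → α), Injective c ∧ ∀ j, E (c j) (c (j + 1)) := by
  classical
  have hrep : ∃ d, 0 < d ∧ ∃ i, g (i + d) = g i := by
    obtain ⟨i, j, hij, heq⟩ := Finite.exists_ne_map_eq_of_infinite g
    rcases hij.lt_or_gt with h | h
    · exact ⟨j - i, by omega, i, by rw [Nat.add_sub_cancel' h.le, heq]⟩
    · exact ⟨i - j, by omega, j, by rw [Nat.add_sub_cancel' h.le, heq]⟩
  obtain ⟨hd, i, hi⟩ := Nat.find_spec hrep
  have hmin : ∀ e, 0 < e → e < Nat.find hrep → ∀ i', g (i' + e) ≠ g i' :=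
    fun e he hlt i' heq => Nat.find_min hrep hlt ⟨he, i', heq⟩
  obtain ⟨J, hJ⟩ : ∃ J, Nat.find hrep = J + 2 := by
    refine ⟨Nat.find hrep - 2, ?_⟩
    have : Nat.find hrep ≠ 1 := fun h1 => hirr (g i) (by rw [h1] at hi; simpa [hi] using hg i)
    omega
  rw [hJ] at hi hmin
  refine ⟨J, fun j => g (i + j), fun s t hst => ?_, fun j => ?_⟩
  · by_contra hne
    rcases Fin.val_ne_iff.2 hne |>.lt_or_gt with h | h
    · exact hmin (t - s) (by omega) (by omega) (i + s)
        (by rw [show i + s + (t - s) = i + t by omega]; exact hst.symm)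
    · exact hmin (s - t) (by omega) (by omega) (i + t)
        (by rw [show i + t + (s - t) = i + s by omega]; exact hst)
  · simp only [Fin.val_add_one]
    split_ifs with hlast
    · have hwrap := hg (i + (J + 1))
      rw [show i + (J + 1) + 1 = i + (J + 2) by omega, hi] at hwrap
      simpa [hlast] using hwrap
    · exact hg (i + j)

lemma exists_injective_cycle_of_transGen [Finite α] (hirr : ∀ a, ¬ E a a) {a : α}
    (h : TransGen E a a) :
    ∃ (J : ℕ) (c : Fin (J + 2) → α), Injective c ∧ ∀ j, E (c j) (c (j + 1)) :=
  let ⟨_, hg⟩ := exists_walk_of_transGen_self h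
  exists_injective_cycle_of_walk hirr hg

/-- Counting the `TransGen`-predecessors in `I` ranks an acyclic relation topologically. -/
lemma exists_rank_of_acyclic (I : Finset α) (hacyc : ∀ a, ¬ TransGen E a a) :
    ∃ f : α → ℕ, (∀ a ∈ I, ∀ b, E a b → f a < f b) ∧ ∀ b ∈ I, f b < #I := by
  classical
  refine ⟨fun a => #(I.filter (TransGen E · a)), fun a ha b hab => ?_, fun b hb => ?_⟩
  · refine card_lt_card ⟨fun c hc => ?_, fun hsub => ?_⟩
    · simp only [mem_filter] at hc ⊢
      exact ⟨hc.1, hc.2.tail hab⟩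
    · exact hacyc a (mem_filter.1 (hsub (mem_filter.2 ⟨ha, TransGen.single hab⟩))).2
  · exact card_lt_card (filter_ssubset.2 ⟨b, hb, hacyc b⟩)

end Cycles

section Pairing

variable {ι Θ : Type*} [Fintype ι] [Fintype Θ]

def pairing (w : ι → Θ → ℝ) : (ι → Θ → ℝ) →ₗ[ℝ] ℝ where
  toFun r := ∑ k, ∑ θ, r k θ * w k θ
  map_add' r s := by simp only [Pi.add_apply, add_mul, sum_add_distrib]
  map_smul' c r := by
    simp only [Pi.smul_apply, smul_eq_mul, mul_assoc, ← mul_sum, RingHom.id_apply]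

lemma pairing_apply (w r : ι → Θ → ℝ) : pairing w r = ∑ k, ∑ θ, r k θ * w k θ := rfl

lemma pairing_row_indicator [DecidableEq ι] (r : ι → Θ → ℝ) (k : ι) :
    pairing (fun k' _ => if k' = k then 1 else 0) r = ∑ θ, r k θ := by
  rw [pairing_apply, Fintype.sum_eq_single k fun k' hk' => by simp [hk']]
  simp

lemma pairing_column_indicator [DecidableEq Θ] (r : ι → Θ → ℝ) (θ : Θ) :
    pairing (fun _ θ' => if θ' = θ then 1 else 0) r = ∑ k, r k θ := by
  simp [pairing_apply]

lemma pairing_single_single [DecidableEq ι] [DecidableEq Θ] (w : ι → Θ → ℝ) (k : ι) (θ : Θ) :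
    pairing w (Pi.single k (Pi.single θ 1)) = w k θ := by
  rw [pairing_apply, Fintype.sum_eq_single k fun k' hk' => by simp [hk']]
  simp [Pi.single_apply]

end Pairing

lemma Fin.sum_add_one_sub_eq_zero {n : ℕ} [NeZero n] (g : Fin n → ℝ) :
    ∑ j, (g (j + 1) - g j) = 0 := by
  rw [sum_sub_distrib, sub_eq_zero]
  exact Equiv.sum_comp (Equiv.addRight (1 : Fin n)) g

section CycleShift

variable {ι Θ : Type*} [DecidableEq ι] [DecidableEq Θ] {n : ℕ} [NeZero n]

/-- Along the cycle of agents `kk 0, kk 1, …`, each agent `kk j` passes `ε` of its report mass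
at `ϑ j` on to the next agent `kk (j + 1)`. -/
def cycleShift (r : ι → Θ → ℝ) (kk : Fin n → ι) (ϑ : Fin n → Θ) (ε : ℝ) : ι → Θ → ℝ :=
  r + ε • ∑ j, (Pi.single (kk (j + 1)) (Pi.single (ϑ j) 1) - Pi.single (kk j) (Pi.single (ϑ j) 1))

lemma pairing_cycleShift [Fintype ι] [Fintype Θ] (w r : ι → Θ → ℝ) (kk : Fin n → ι)
    (ϑ : Fin n → Θ) (ε : ℝ) :
    pairing w (cycleShift r kk ϑ ε) =
      pairing w r + ε * ∑ j, (w (kk (j + 1)) (ϑ j) - w (kk j) (ϑ j)) := by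
  simp [cycleShift, map_sum, pairing_single_single]

lemma cycleShift_nonneg {r : ι → Θ → ℝ} (hr : ∀ k θ, 0 ≤ r k θ) {kk : Fin n → ι}
    (hkk : Injective kk) {ϑ : Fin n → Θ} {ε : ℝ} (hε : 0 ≤ ε) (hεr : ∀ j, ε ≤ r (kk j) (ϑ j))
    (k : ι) (θ : Θ) : 0 ≤ cycleShift r kk ϑ ε k θ := by
  have hgain : 0 ≤ ∑ j, (Pi.single (kk (j + 1)) (Pi.single (ϑ j) 1) : ι → Θ → ℝ) k θ :=
    sum_nonneg fun j _ => (Pi.single_nonneg.2 (Pi.single_nonneg.2 zero_le_one) :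
      (0 : ι → Θ → ℝ) ≤ Pi.single (kk (j + 1)) (Pi.single (ϑ j) 1)) k θ
  have hloss : ε * ∑ j, (Pi.single (kk j) (Pi.single (ϑ j) 1) : ι → Θ → ℝ) k θ ≤ r k θ := by
    by_cases hk : ∃ j, kk j = k
    · obtain ⟨j, rfl⟩ := hk
      rw [Fintype.sum_eq_single j fun i hij => by simp [hkk.ne hij]]
      by_cases hθ : θ = ϑ j
      · simpa [hθ] using hεr j
      · simpa [hθ] using hr (kk j) θ
    · simp only [not_exists] at hk
      simpa [hk] using hr k θ
  simp only [cycleShift, Pi.add_apply, Pi.smul_apply, Finset.sum_apply, Pi.sub_apply,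
    sum_sub_distrib, smul_eq_mul, mul_sub]
  nlinarith

lemma Feasible.cycleShift [Fintype Θ] {K : ℕ} {q : Θ → ℝ} {r : Fin K → Θ → ℝ} (hr : Feasible K q r)
    {kk : Fin n → Fin K} (hkk : Injective kk) {ϑ : Fin n → Θ} {ε : ℝ} (hε : 0 ≤ ε)
    (hεr : ∀ j, ε ≤ r (kk j) (ϑ j)) : Feasible K q (cycleShift r kk ϑ ε) := by
  refine ⟨fun k => ⟨cycleShift_nonneg (fun k => (hr.1 k).1) hkk hε hεr k, ?_⟩, fun θ => ?_⟩
  · have hrow := pairing_cycleShift (fun k' _ => if k' = k then 1 else 0) r kk ϑ ε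
    rw [pairing_row_indicator, pairing_row_indicator,
      Fin.sum_add_one_sub_eq_zero (fun j => if kk j = k then 1 else 0), mul_zero,
      add_zero] at hrow
    rw [hrow, (hr.1 k).2]
  · have hcol := pairing_cycleShift (fun _ θ' => if θ' = θ then 1 else 0) r kk ϑ ε
    simp only [pairing_column_indicator, sub_self, sum_const_zero, mul_zero, add_zero] at hcol
    rw [hcol, hr.2 θ]

end CycleShift

theorem IsCompact.exists_lexMax {β γ δ : Type*} [TopologicalSpace β]
    [TopologicalSpace γ] [LinearOrder γ] [OrderClosedTopology γ]
    [TopologicalSpace δ] [LinearOrder δ] [OrderClosedTopology δ]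
    {s : Set β} (hs : IsCompact s) (hne : s.Nonempty) {f : β → γ} {g : β → δ}
    (hf : Continuous f) (hg : Continuous g) :
    ∃ x ∈ s, ∀ y ∈ s, f y ≤ f x ∧ (f x ≤ f y → g y ≤ g x) := by
  obtain ⟨x₁, hx₁, hfmax⟩ := hs.exists_isMaxOn hne hf.continuousOn
  obtain ⟨x, ⟨hxs, hfx⟩, hgmax⟩ := (hs.inter_right (isClosed_singleton.preimage hf)).exists_isMaxOn
    ⟨x₁, hx₁, rfl⟩ hg.continuousOn
  have hfx : f x = f x₁ := hfx
  refine ⟨x, hxs, fun y hy => ⟨hfx ▸ hfmax hy, fun hle => hgmax ⟨hy, ?_⟩⟩⟩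
  exact le_antisymm (hfmax hy) (hfx ▸ hle)

section Feasibility

variable {Θ : Type*} [Fintype Θ]

lemma isCompact_setOf_feasible (K : ℕ) (q : Θ → ℝ) :
    IsCompact {r : Fin K → Θ → ℝ | Feasible K q r} := by
  have hset : {r : Fin K → Θ → ℝ | Feasible K q r} =
      Set.univ.pi (fun _ => stdSimplex ℝ Θ) ∩ ⋂ θ, {r | (∑ k, r k θ) / K = q θ} := by
    ext r
    simp [Feasible, IsProbVec, stdSimplex]
  rw [hset]
  exact (isCompact_univ_pi fun _ => isCompact_stdSimplex ℝ Θ).inter_right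
    (isClosed_iInter fun θ => isClosed_eq (by fun_prop) continuous_const)

variable {K : ℕ} {q : Θ → ℝ}

lemma feasible_const (hq : IsProbVec q) (hK : K ≠ 0) : Feasible K q fun _ => q :=
  ⟨fun _ => hq, fun θ => by simp [hK]⟩

lemma Feasible.sum_eq_smul {r : Fin K → Θ → ℝ} (hr : Feasible K q r) (hK : K ≠ 0) :
    ∑ k, r k = (K : ℝ) • q := by
  ext θ
  rw [Finset.sum_apply, Pi.smul_apply, smul_eq_mul, ← hr.2 θ, mul_div_cancel₀]
  exact_mod_cast hK

lemma sum_delta_eq_smul_marg [DecidableEq Θ] (hK : K ≠ 0) (θv : Fin K → Θ) :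
    ∑ k, delta (θv k) = (K : ℝ) • marg K θv := by
  ext θ
  simp [delta, marg, eq_comm, mul_div_cancel₀, hK]

end Feasibility

section Exchange

variable {Θ X : Type*} [Fintype Θ] [Fintype X] [DecidableEq X]

lemma payoffDet_eq_pairing (u : X × Θ → ℝ) (x : Θ → X) (K : ℕ) (θv : Fin K → Θ)
    (r : Fin K → Θ → ℝ) :
    payoffDet u x K θv r = pairing (fun k θ' => u (x θ', θv k)) r / K := by
  simp [payoffDet, pairing_apply, ubar_push]

noncomputable def ownOutcomeWeight [DecidableEq Θ] {K : ℕ} (x : Θ → X) (θv : Fin K → Θ) :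
    (Fin K → Θ → ℝ) →ₗ[ℝ] ℝ :=
  pairing fun k θ' => delta (x (θv k)) (x θ')

def transferRel {ι α : Type*} (γ : ι → α → ℝ) (a : ι → α) (b c : α) : Prop :=
  b ≠ c ∧ ∃ k, a k = b ∧ 0 < γ k c

theorem not_transGen_transferRel [DecidableEq Θ] {u : X × Θ → ℝ} {x : Θ → X}
    (hcm : CyclMonoDet u x) {K : ℕ} {q : Θ → ℝ} {θv : Fin K → Θ} {r : Fin K → Θ → ℝ}
    (hr : Feasible K q r)
    (hlex : ∀ r', Feasible K q r' → payoffDet u x K θv r ≤ payoffDet u x K θv r' →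
      ownOutcomeWeight x θv r' ≤ ownOutcomeWeight x θv r)
    (a : X) :
    ¬ TransGen (transferRel (fun k => push x (r k)) fun k => x (θv k)) a a := by
  intro h
  obtain ⟨J, c, hc, hedge⟩ := exists_injective_cycle_of_transGen (fun _ h => h.1 rfl) h
  choose kk hkk hpos using fun j => (hedge j).2
  choose ϑ hϑ hϑpos using fun j => exists_pos_of_push_pos (hpos j)
  have hθs : Injective fun j => θv (kk j) := fun i j hij => hc (by simp only [← hkk, hij])
  set ε := univ.inf' univ_nonempty fun j => r (kk j) (ϑ j)
  have hε : 0 < ε := (lt_inf'_iff _).2 fun j _ => hϑpos j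
  have hfeas := hr.cycleShift (hθs.of_comp (f := θv)) hε.le fun j => inf'_le _ (mem_univ j)
  have hpay : payoffDet u x K θv r ≤ payoffDet u x K θv (cycleShift r kk ϑ ε) := by
    rw [payoffDet_eq_pairing, payoffDet_eq_pairing, pairing_cycleShift]
    refine div_le_div_of_nonneg_right (le_add_of_nonneg_right (mul_nonneg hε.le ?_)) K.cast_nonneg
    have hcyc := hcm J _ hθs
    have hshift := Fin.sum_add_one_sub_eq_zero fun j => u (x (θv (kk j)), θv (kk j))
    simp only [hϑ, ← hkk, sum_sub_distrib] at hcyc hshift ⊢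
    linarith
  have hdiag : ownOutcomeWeight x θv (cycleShift r kk ϑ ε) =
      ownOutcomeWeight x θv r + ε * (J + 2) := by
    have hne : ∀ j, c (j + 1) ≠ c j := fun j => (hedge j).1.symm
    rw [ownOutcomeWeight, pairing_cycleShift]
    simp [hϑ, hkk, delta, hne]
  linarith [hlex _ hfeas hpay, mul_pos hε (by positivity : (0 : ℝ) < J + 2)]

end Exchange

theorem quota_expost_bound_deterministic {Θ X : Type*} [Fintype Θ] [Fintype X]
    [Nonempty Θ] [DecidableEq Θ] [DecidableEq X]
    (u : X × Θ → ℝ) (x : Θ → X) (hcm : CyclMonoDet u x)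
    (q : Θ → ℝ) (hq : IsProbVec q) (K : ℕ) (hK : 1 ≤ K) (θv : Fin K → Θ) :
    ∃ r : Fin K → Θ → ℝ, Feasible K q r ∧
      (∀ r' : Fin K → Θ → ℝ, Feasible K q r' →
        payoffDet u x K θv r' ≤ payoffDet u x K θv r) ∧
      (∑ k, tv (push x (r k)) (delta (x (θv k)))) / K ≤
        (((Finset.univ.image x).card : ℝ) - 1) *
          tv (push x q) (push x (marg K θv)) := by
  have hK0 : K ≠ 0 := by omega
  have hpay_cont : Continuous (payoffDet u x K θv) :=
    ((LinearMap.continuous_of_finiteDimensional _).div_const _).congr fun r =>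
      (payoffDet_eq_pairing u x K θv r).symm
  obtain ⟨r, hr, hlex⟩ := (isCompact_setOf_feasible K q).exists_lexMax
    ⟨_, feasible_const hq hK0⟩ hpay_cont
    (LinearMap.continuous_of_finiteDimensional (ownOutcomeWeight x θv))
  refine ⟨r, hr, fun r' hr' => (hlex r' hr').1, ?_⟩
  obtain ⟨f, hf_edge, hf_lt⟩ := exists_rank_of_acyclic (univ.image x)
    (not_transGen_transferRel hcm hr fun r' hr' => (hlex r' hr').2)
  have hflow := sum_tv_delta_le_mul_tv (fun k => (hr.1 k).push x) f (#(univ.image x) - 1)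
    (fun k b hb hba => hf_edge _ (mem_image_of_mem x (mem_univ _)) b ⟨Ne.symm hba, k, rfl, hb⟩)
    fun k b hb => by
      obtain ⟨θ, rfl, -⟩ := exists_pos_of_push_pos hb
      have := hf_lt _ (mem_image_of_mem x (mem_univ θ))
      omega
  have hsum : ∑ k, push x (r k) = (K : ℝ) • push x q := by
    rw [← push_sum, hr.sum_eq_smul hK0, push_smul]
  have hsum_delta : ∑ k, delta (x (θv k)) = (K : ℝ) • push x (marg K θv) := by
    simp_rw [← push_delta x, ← push_sum, sum_delta_eq_smul_marg hK0, push_smul]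
  rw [hsum, hsum_delta, tv_smul K.cast_nonneg,
    Nat.cast_pred (card_pos.2 (univ_nonempty.image x))] at hflow
  rw [div_le_iff₀ (by positivity)]
  linarith
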